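/- Let Σ = {a,b}, let ∼ be the relation {(a,b),(b,a)} on Σ (which is neither reflexive nor transitive), and let G = {ab}. Then L((ab)*)_G ∩ L(a* b*) = { a^k b^k | k ≥ 0 }; consequently L((ab)*)_G is not regular, even though L((ab)*) is regular and G is finite. -/

import Mathlib

/-- The alphabet `Σ = {a, b}`. -/
inductive AB : Type
  | a : AB
  | b : AB
deriving DecidableEq

instance instFintypeAB : Fintype AB :=
  ⟨{AB.a, AB.b}, fun x => by cases x <;> simp⟩

/-- The adjustment relation `∼ = {(a,b), (b,a)}`, which is neither reflexive
nor transitive. -/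
def simAB (x y : AB) : Prop :=
  (x = AB.a ∧ y = AB.b) ∨ (x = AB.b ∧ y = AB.a)

/-- A guided rewrite step w.r.t. an adjustment relation `sim`. -/
def GuidedStep {α : Type} (sim : α → α → Prop) (G : Set (List α)) (u v : List α) : Prop :=
  ∃ g ∈ G, ∃ x y z : List α, u = x ++ y ++ z ∧ v = x ++ g ++ z ∧ List.Forall₂ sim y g

/-- The language of the regular expression `(ab)*`. -/
def Labstar : Language AB :=
  {w | ∃ k : ℕ, w = (List.replicate k [AB.a, AB.b]).flatten}

/-!
Since `x ∼ y` forces `x ≠ y`, the only word related to the guide `ab` is `ba`, so a guided step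
replaces a factor `ba` by `ab`. Such steps preserve the number of `a`s and of `b`s, which are equal
on `(ab)*`; conversely, bubbling each new `a` of `(ab)^k` leftwards past the `b`s already there
reaches `a^k b^k`. Hence every `a^k b^k` lies in the closure while `a^i b^j` with `i ≠ j` does not,
so the words `a^i` have pairwise distinct left quotients and Myhill–Nerode rules out regularity.
-/

open AB List Relation

section GuidedStep

variable {α : Type} {sim : α → α → Prop} {G : Set (List α)} {u v : List α}

theorem GuidedStep.append_right (h : GuidedStep sim G u v) (w : List α) :
    GuidedStep sim G (u ++ w) (v ++ w) := by
  obtain ⟨g, hg, x, y, z, rfl, rfl, hy⟩ := h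
  exact ⟨g, hg, x, y, z ++ w, by simp, by simp, hy⟩

theorem GuidedStep.append_left (h : GuidedStep sim G u v) (w : List α) :
    GuidedStep sim G (w ++ u) (w ++ v) := by
  obtain ⟨g, hg, x, y, z, rfl, rfl, hy⟩ := h
  exact ⟨g, hg, w ++ x, y, z, by simp, by simp, hy⟩

theorem GuidedStep.reflTransGen_append (h : ReflTransGen (GuidedStep sim G) u v)
    (w₁ w₂ : List α) : ReflTransGen (GuidedStep sim G) (w₁ ++ u ++ w₂) (w₁ ++ v ++ w₂) :=
  h.lift (fun s => w₁ ++ s ++ w₂) fun _ _ hst => (hst.append_left w₁).append_right w₂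

end GuidedStep

theorem Language.not_isRegular_of_count_eq {α : Type*} [DecidableEq α] {L : Language α}
    {x y : α} (hxy : x ≠ y) (hcount : ∀ w ∈ L, w.count x = w.count y)
    (hmem : ∀ k, replicate k x ++ replicate k y ∈ L) : ¬ L.IsRegular := by
  intro hL
  have hfin : (Set.range fun i => L.leftQuotient (replicate i x)).Finite :=
    hL.finite_range_leftQuotient.subset
      (Set.range_comp_subset_range (replicate · x) L.leftQuotient)
  refine Set.not_infinite.2 hfin (Set.infinite_range_of_injective fun i j hij => ?_)
  have hj : replicate j y ∈ L.leftQuotient (replicate i x) := by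
    rw [hij, Language.mem_leftQuotient]
    exact hmem j
  simpa [count_append, count_replicate, hxy, hxy.symm] using hcount _ hj

abbrev abStep : List AB → List AB → Prop := GuidedStep simAB {[a, b]}

def closureLabstar : Set (List AB) := {v | ∃ u ∈ Labstar, ReflTransGen abStep u v}

theorem forall₂_simAB_ab_iff {y : List AB} : Forall₂ simAB y [a, b] ↔ y = [b, a] := by
  constructor
  · simp only [forall₂_cons_right_iff, forall₂_nil_right_iff]
    rintro ⟨x₁, _, hx₁, ⟨x₂, _, hx₂, rfl, rfl⟩, rfl⟩
    cases x₁ <;> cases x₂ <;> simp_all [simAB]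
  · rintro rfl
    exact .cons (Or.inr ⟨rfl, rfl⟩) (.cons (Or.inl ⟨rfl, rfl⟩) .nil)

theorem abStep_iff {u v : List AB} :
    abStep u v ↔ ∃ x z, u = x ++ [b, a] ++ z ∧ v = x ++ [a, b] ++ z := by
  simp only [abStep, GuidedStep, Set.mem_singleton_iff, exists_eq_left, forall₂_simAB_ab_iff]
  constructor
  · rintro ⟨x, _, z, hu, hv, rfl⟩
    exact ⟨x, z, hu, hv⟩
  · rintro ⟨x, z, hu, hv⟩
    exact ⟨x, [b, a], z, hu, hv, rfl⟩

theorem abStep.count_eq {u v : List AB} (h : abStep u v) (c : AB) : u.count c = v.count c := by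
  obtain ⟨x, z, rfl, rfl⟩ := abStep_iff.1 h
  cases c <;> simp [count_append]

theorem count_eq_of_reflTransGen_abStep {u v : List AB} (h : ReflTransGen abStep u v) (c : AB) :
    u.count c = v.count c := by
  induction h with
  | refl => rfl
  | tail _ hstep ih => exact ih.trans (hstep.count_eq c)

theorem reflTransGen_abStep_replicate_b_a (j : ℕ) :
    ReflTransGen abStep (replicate j b ++ [a]) (a :: replicate j b) := by
  induction j with
  | zero => exact .refl
  | succ j ih =>
    have hswap : abStep (replicate (j + 1) b ++ [a]) (replicate j b ++ [a] ++ [b]) :=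
      abStep_iff.2 ⟨replicate j b, [], by simp [replicate_succ'], by simp⟩
    simpa [replicate_succ'] using
      ReflTransGen.head hswap (GuidedStep.reflTransGen_append ih [] [b])

theorem abstar_succ (k : ℕ) :
    (replicate (k + 1) [a, b]).flatten = (replicate k [a, b]).flatten ++ [a, b] := by
  simp [replicate_succ']

theorem reflTransGen_abStep_abstar (k : ℕ) :
    ReflTransGen abStep (replicate k [a, b]).flatten (replicate k a ++ replicate k b) := by
  induction k with
  | zero => exact .refl
  | succ k ih =>
    rw [abstar_succ]
    refine (GuidedStep.reflTransGen_append ih [] [a, b]).trans ?_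
    simpa [replicate_succ'] using
      GuidedStep.reflTransGen_append (reflTransGen_abStep_replicate_b_a k) (replicate k a) [b]

theorem count_eq_of_mem_closureLabstar {v : List AB} (hv : v ∈ closureLabstar) :
    v.count a = v.count b := by
  obtain ⟨u, ⟨k, rfl⟩, hu⟩ := hv
  rw [← count_eq_of_reflTransGen_abStep hu, ← count_eq_of_reflTransGen_abStep hu]
  simp [count_flatten]

theorem replicate_append_replicate_mem_closureLabstar (k : ℕ) :
    replicate k a ++ replicate k b ∈ closureLabstar :=
  ⟨_, ⟨k, rfl⟩, reflTransGen_abStep_abstar k⟩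

-- `some true`: a word of `(ab)*` was read; `some false`: such a word followed by `a`; `none`: dead.
def abstarStep : Option Bool → AB → Option Bool
  | some true, a => some false
  | some false, b => some true
  | _, _ => none

def abstarDFA : DFA AB (Option Bool) := ⟨abstarStep, some true, {some true}⟩

theorem abstarDFA_eval_abstar (k : ℕ) :
    abstarDFA.eval (replicate k [a, b]).flatten = some true := by
  induction k with
  | zero => rfl
  | succ k ih =>
    rw [abstar_succ, DFA.eval, DFA.evalFrom_of_append, ← DFA.eval, ih]
    rfl

theorem abstarDFA_eval_some (w : List AB) :
    (abstarDFA.eval w = some true → w ∈ Labstar) ∧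
    (abstarDFA.eval w = some false → ∃ k, w = (replicate k [a, b]).flatten ++ [a]) := by
  induction w using List.reverseRecOn with
  | nil => exact ⟨fun _ => ⟨0, rfl⟩, fun h => by simp [abstarDFA] at h⟩
  | append_singleton w c ih =>
    obtain ⟨ih_even, ih_odd⟩ := ih
    rw [DFA.eval_append_singleton]
    rcases hs : abstarDFA.eval w with _ | _ | _ <;> cases c <;>
      simp [abstarDFA, abstarStep]
    · obtain ⟨k, rfl⟩ := ih_odd hs
      exact ⟨k + 1, by rw [abstar_succ]; simp⟩
    · exact ih_even hs

theorem abstarDFA_accepts : abstarDFA.accepts = Labstar := by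
  ext w
  refine ⟨(abstarDFA_eval_some w).1, ?_⟩
  rintro ⟨k, rfl⟩
  exact abstarDFA_eval_abstar k

theorem closureLabstar_inter_aStar_bStar :
    closureLabstar ∩ {w | ∃ m n : ℕ, w = replicate m a ++ replicate n b} =
      {w | ∃ k : ℕ, w = replicate k a ++ replicate k b} := by
  ext w
  constructor
  · rintro ⟨hw, m, n, rfl⟩
    have hmn : m = n := by
      simpa [count_append, count_replicate] using count_eq_of_mem_closureLabstar hw
    exact ⟨m, by rw [hmn]⟩
  · rintro ⟨k, rfl⟩
    exact ⟨replicate_append_replicate_mem_closureLabstar k, k, k, rfl⟩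

theorem not_isRegular_closureLabstar : ¬ Language.IsRegular closureLabstar :=
  Language.not_isRegular_of_count_eq (x := a) (y := b) (by decide)
    (fun _ => count_eq_of_mem_closureLabstar) replicate_append_replicate_mem_closureLabstar

/-- With the non-equivalence adjustment relation
`∼ = {(a,b),(b,a)}` and the single guide `ab`, one has
`L((ab)*)_G ∩ L(a* b*) = { a^k b^k | k ≥ 0 }`; consequently `L((ab)*)_G` is
not regular, even though `L((ab)*)` is regular and `G` is finite. -/
theorem non_equivalence_adjustment_not_regular :
    ({v : List AB | ∃ u ∈ Labstar,
        Relation.ReflTransGen (GuidedStep simAB {[AB.a, AB.b]}) u v} ∩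
        {w : List AB | ∃ m n : ℕ,
          w = List.replicate m AB.a ++ List.replicate n AB.b} =
      {w : List AB | ∃ k : ℕ,
          w = List.replicate k AB.a ++ List.replicate k AB.b}) ∧
    ¬ Language.IsRegular
        {v : List AB | ∃ u ∈ Labstar,
          Relation.ReflTransGen (GuidedStep simAB {[AB.a, AB.b]}) u v} ∧
    Language.IsRegular Labstar ∧
    Set.Finite ({[AB.a, AB.b]} : Set (List AB)) := by
  exact ⟨closureLabstar_inter_aStar_bStar, not_isRegular_closureLabstar,
    ⟨Option Bool, inferInstance, abstarDFA, abstarDFA_accepts⟩, Set.finite_singleton _⟩
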